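/- (Theorem 1.) Let g_1, ..., g_m be real polynomials in n variables and let S = {x ∈ ℝⁿ : g_i(x) ≤ 1, i = 1, ..., m}. Assume the quadratic module generated by the polynomials 1 − g_1, ..., 1 − g_m is Archimedean, i.e., there exist a real number N and sum of squares polynomials σ_0, σ_1, ..., σ_m such that N − Σ_{k=1}^n x_k² = σ_0 + Σ_{i=1}^m σ_i · (1 − g_i). Let p be a real polynomial in n variables with p(x) < 1 for all x ∈ S. Then there exist sum of squares polynomials τ_1, ..., τ_m in n variables such that the polynomial 1 − p − Σ_{i=1}^m τ_i · (1 − g_i) is a sum of squares. -/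

import Mathlib

/-- A polynomial is a sum of squares if it is a finite sum of squares of polynomials. -/
def IsSos {n : ℕ} (p : MvPolynomial (Fin n) ℝ) : Prop :=
  ∃ (k : ℕ) (q : Fin k → MvPolynomial (Fin n) ℝ), p = ∑ i, (q i) ^ 2

/-!
Put `G = N - ∑ xₖ²` and take a cube `[-a, a]ⁿ` with `a² ≥ N`. On the cube, `1 - p` is positive
wherever every `1 - gᵢ` is nonnegative, so by compactness subtracting penalties
`tᵢ (1 - gᵢ)` with `tᵢ = λ (1 - (1 - gᵢ) / c)^(2k)` makes it positive on the whole cube.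
A polynomial positive on a cube has nonnegative coefficients in a tensor Bernstein basis
`∏ (a + xᵢ)^βᵢ (a - xᵢ)^(k - βᵢ)` of high degree `k`, because those coefficients approximate its
values at grid points; and each `a ± xᵢ` lies in `Σ + Σ G` by an explicit identity. Hence
`1 - p - ∑ tᵢ (1 - gᵢ) ∈ Σ + Σ G`, and substituting the Archimedean certificate for `G` finishes.
-/

open MvPolynomial Finset

namespace Putinar

theorem isSos_iff_isSumSq {n : ℕ} {p : MvPolynomial (Fin n) ℝ} : IsSos p ↔ IsSumSq p := by
  constructor
  · rintro ⟨k, q, rfl⟩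
    exact IsSumSq.sum_sq _ _
  · intro hp
    induction hp with
    | zero => exact ⟨0, Fin.elim0, by simp⟩
    | sq_add a _ ih =>
      obtain ⟨k, q, rfl⟩ := ih
      exact ⟨k + 1, Fin.cons a q, by simp [Fin.sum_univ_succ, sq]⟩

section Preordering

variable {R : Type*} [CommRing R]

def preordering (G : R) : Subsemiring R where
  carrier := {p | ∃ s₀ s₁, IsSumSq s₀ ∧ IsSumSq s₁ ∧ p = s₀ + s₁ * G}
  zero_mem' := ⟨0, 0, .zero, .zero, by ring⟩
  one_mem' := ⟨1, 0, .one, .zero, by ring⟩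
  add_mem' := by
    rintro _ _ ⟨s₀, s₁, hs₀, hs₁, rfl⟩ ⟨t₀, t₁, ht₀, ht₁, rfl⟩
    exact ⟨s₀ + t₀, s₁ + t₁, hs₀.add ht₀, hs₁.add ht₁, by ring⟩
  mul_mem' := by
    rintro _ _ ⟨s₀, s₁, hs₀, hs₁, rfl⟩ ⟨t₀, t₁, ht₀, ht₁, rfl⟩
    exact ⟨s₀ * t₀ + s₁ * t₁ * (G * G), s₀ * t₁ + s₁ * t₀,
      (hs₀.mul ht₀).add ((hs₁.mul ht₁).mul (.mul_self G)), (hs₀.mul ht₁).add (hs₁.mul ht₀),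
      by ring⟩

theorem mem_preordering_of_isSumSq {G p : R} (hp : IsSumSq p) : p ∈ preordering G :=
  ⟨p, 0, hp, .zero, by ring⟩

variable {ι : Type*} [Fintype ι]

def quadraticModule (h : ι → R) : AddSubmonoid R where
  carrier := {p | ∃ τ : ι → R, (∀ i, IsSumSq (τ i)) ∧ IsSumSq (p - ∑ i, τ i * h i)}
  zero_mem' := ⟨0, fun _ => .zero, by simp⟩
  add_mem' := by
    rintro p q ⟨τ, hτ, hp⟩ ⟨υ, hυ, hq⟩
    refine ⟨τ + υ, fun i => (hτ i).add (hυ i), ?_⟩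
    have : p + q - ∑ i, (τ + υ) i * h i = (p - ∑ i, τ i * h i) + (q - ∑ i, υ i * h i) := by
      simp only [Pi.add_apply, add_mul, sum_add_distrib]
      ring
    exact this ▸ hp.add hq

theorem mem_quadraticModule_of_isSumSq {h : ι → R} {p : R} (hp : IsSumSq p) :
    p ∈ quadraticModule h :=
  ⟨0, fun _ => .zero, by simpa using hp⟩

theorem mul_generator_mem_quadraticModule {h : ι → R} {s : R} (hs : IsSumSq s) (i : ι) :
    s * h i ∈ quadraticModule h := by
  classical
  refine ⟨Pi.single i s, fun j => ?_, ?_⟩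
  · rcases eq_or_ne j i with rfl | hj
    · simpa using hs
    · simp [hj]
  · simp [Pi.single_apply, ite_mul]

theorem mul_mem_quadraticModule {h : ι → R} {s p : R} (hs : IsSumSq s)
    (hp : p ∈ quadraticModule h) : s * p ∈ quadraticModule h := by
  obtain ⟨τ, hτ, hp⟩ := hp
  refine ⟨fun i => s * τ i, fun i => hs.mul (hτ i), ?_⟩
  have : s * p - ∑ i, s * τ i * h i = s * (p - ∑ i, τ i * h i) := by
    simp only [mul_sub, mul_sum, mul_assoc]
  exact this ▸ hs.mul hp

theorem preordering_subset_quadraticModule {h : ι → R} {G : R} (hG : G ∈ quadraticModule h) :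
    (preordering G : Set R) ⊆ quadraticModule h := by
  rintro _ ⟨s₀, s₁, hs₀, hs₁, rfl⟩
  exact add_mem (mem_quadraticModule_of_isSumSq hs₀) (mul_mem_quadraticModule hs₁ hG)

end Preordering

theorem isSumSq_algebraMap {A : Type*} [CommRing A] [Algebra ℝ A] {c : ℝ} (hc : 0 ≤ c) :
    IsSumSq (algebraMap ℝ A c) := by
  have : algebraMap ℝ A c = algebraMap ℝ A √c * algebraMap ℝ A √c := by
    rw [← map_mul, Real.mul_self_sqrt hc]
  rw [this]
  exact .mul_self _

/-- Since `a² - N ≥ 0`, `2a (a + y) = (a + y)² + (a² - N) + (N - y² - G) + G`. -/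
theorem algebraMap_add_mem_preordering {A : Type*} [CommRing A] [Algebra ℝ A] {a N : ℝ}
    (ha : 0 < a) (hN : N ≤ a ^ 2) {y G : A} (hG : IsSumSq (algebraMap ℝ A N - y ^ 2 - G)) :
    algebraMap ℝ A a + y ∈ preordering G := by
  have hinv : algebraMap ℝ A (2 * a)⁻¹ * algebraMap ℝ A (2 * a) = 1 := by
    rw [← map_mul, inv_mul_cancel₀ (by positivity), map_one]
  refine ⟨algebraMap ℝ A (2 * a)⁻¹ * ((algebraMap ℝ A a + y) * (algebraMap ℝ A a + y) +
      algebraMap ℝ A (a ^ 2 - N) + (algebraMap ℝ A N - y ^ 2 - G)), algebraMap ℝ A (2 * a)⁻¹,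
    (isSumSq_algebraMap (by positivity)).mul (((IsSumSq.mul_self _).add
      (isSumSq_algebraMap (by linarith))).add hG), isSumSq_algebraMap (by positivity), ?_⟩
  simp only [map_sub, map_pow, map_mul, map_ofNat] at hinv ⊢
  linear_combination (-(algebraMap ℝ A a + y)) * hinv

theorem choose_mul_descFactorial {k c m : ℕ} (hmc : m ≤ c) :
    k.choose c * c.descFactorial m = k.descFactorial m * (k - m).choose (c - m) := by
  rw [Nat.descFactorial_eq_factorial_mul_choose, Nat.descFactorial_eq_factorial_mul_choose,
    mul_left_comm, Nat.choose_mul hmc, mul_assoc]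

theorem pow_eq_sum_descFactorial_div_mul {A : Type*} [CommRing A] [Algebra ℝ A] (x : A)
    {m k : ℕ} (hmk : m ≤ k) :
    x ^ m = ∑ c ∈ range (k + 1), algebraMap ℝ A ((c.descFactorial m : ℝ) / k.descFactorial m) *
      ((k.choose c : A) * x ^ c * (1 - x) ^ (k - c)) := by
  have hk : (k.descFactorial m : ℝ) ≠ 0 := by
    exact_mod_cast (Nat.descFactorial_pos.2 hmk).ne'
  have hcoeff : ∀ j, ((m + j).descFactorial m : ℝ) / k.descFactorial m * k.choose (m + j) =
      (k - m).choose j := by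
    intro j
    rw [div_mul_eq_mul_div, div_eq_iff hk, mul_comm]
    exact_mod_cast (choose_mul_descFactorial (k := k) (m.le_add_right j)).trans
      (by rw [Nat.add_sub_cancel_left, mul_comm])
  rw [show k + 1 = m + (k - m + 1) by omega, sum_range_add, sum_eq_zero, zero_add]
  · calc x ^ m = x ^ m * (x + (1 - x)) ^ (k - m) := by simp
      _ = _ := by
        rw [add_pow, mul_sum]
        refine sum_congr rfl fun j _ => ?_
        rw [← map_natCast (algebraMap ℝ A), ← hcoeff, map_mul, map_natCast, Nat.sub_sub, pow_add]
        ring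
  · intro c hc
    rw [Nat.descFactorial_eq_zero_iff_lt.2 (mem_range.1 hc)]
    simp

theorem abs_prod_sub_prod_le {ι : Type*} (s : Finset ι) {u v : ι → ℝ}
    (hu : ∀ i ∈ s, |u i| ≤ 1) (hv : ∀ i ∈ s, |v i| ≤ 1) :
    |∏ i ∈ s, u i - ∏ i ∈ s, v i| ≤ ∑ i ∈ s, |u i - v i| := by
  classical
  induction s using Finset.induction_on with
  | empty => simp
  | insert a s ha ih =>
    simp only [mem_insert, forall_eq_or_imp] at hu hv
    rw [prod_insert ha, prod_insert ha, sum_insert ha]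
    have hprod : |∏ i ∈ s, v i| ≤ 1 := by
      rw [abs_prod]
      exact prod_le_one (fun i _ => abs_nonneg _) hv.2
    calc |u a * ∏ i ∈ s, u i - v a * ∏ i ∈ s, v i|
        = |u a * (∏ i ∈ s, u i - ∏ i ∈ s, v i) + (u a - v a) * ∏ i ∈ s, v i| := by ring_nf
      _ ≤ |u a| * |∏ i ∈ s, u i - ∏ i ∈ s, v i| + |u a - v a| * |∏ i ∈ s, v i| := by
        rw [← abs_mul, ← abs_mul]
        exact abs_add_le _ _
      _ ≤ 1 * ∑ i ∈ s, |u i - v i| + |u a - v a| * 1 := by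
        gcongr
        · exact hu.1
        · exact ih hu.2 hv.2
      _ = |u a - v a| + ∑ i ∈ s, |u i - v i| := by ring

theorem abs_sub_div_sub_le_one {c k l : ℝ} (hc : 0 ≤ c) (hck : c ≤ k) (hl : 2 * l < k) :
    |(c - l) / (k - l)| ≤ 1 := by
  rw [abs_div, div_le_one (by rw [abs_pos]; linarith), abs_of_pos (by linarith : 0 < k - l),
    abs_le]
  constructor <;> linarith

theorem abs_sub_div_sub_sub_div_le {c k l : ℝ} (hc : 0 ≤ c) (hck : c ≤ k) (hl0 : 0 ≤ l)
    (hl : 2 * l < k) : |(c - l) / (k - l) - c / k| ≤ 2 * l / k := by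
  have hk : 0 < k := by linarith
  have hkl : 0 < k - l := by linarith
  rw [div_sub_div _ _ hkl.ne' hk.ne', abs_div, abs_of_pos (mul_pos hkl hk),
    div_le_div_iff₀ (mul_pos hkl hk) hk, show (c - l) * k - (k - l) * c = -(l * (k - c)) by ring,
    abs_neg, abs_of_nonneg (mul_nonneg hl0 (by linarith))]
  nlinarith [mul_nonneg (mul_nonneg hl0 hk.le) (by linarith : 0 ≤ 2 * (k - l) - (k - c))]

theorem abs_descFactorial_div_le_one {c k : ℕ} (m : ℕ) (hck : c ≤ k) :
    |(c.descFactorial m : ℝ) / k.descFactorial m| ≤ 1 := by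
  rw [abs_of_nonneg (by positivity)]
  exact div_le_one_of_le₀ (by exact_mod_cast Nat.descFactorial_le m hck) (by positivity)

theorem abs_descFactorial_div_sub_pow_le {c k m : ℕ} (hck : c ≤ k) (hm : 2 * m ≤ k) :
    |(c.descFactorial m : ℝ) / k.descFactorial m - ((c : ℝ) / k) ^ m| ≤ 2 * m ^ 2 / k := by
  have hcast : ∀ n : ℕ, (n.descFactorial m : ℝ) = ∏ l ∈ range m, ((n : ℝ) - l) := fun n => by
    rw [← descPochhammer_eval_eq_descFactorial, descPochhammer_eval_eq_prod_range]
  have hc : (0 : ℝ) ≤ c := c.cast_nonneg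
  have hck' : (c : ℝ) ≤ k := by exact_mod_cast hck
  have hl : ∀ l ∈ range m, (0 : ℝ) ≤ l ∧ 2 * (l : ℝ) < k := fun l hl => ⟨l.cast_nonneg, by
    have := mem_range.1 hl; exact_mod_cast (by omega : 2 * l < k)⟩
  rw [hcast, hcast, ← prod_div_distrib,
    show ((c : ℝ) / k) ^ m = ∏ _l ∈ range m, (c : ℝ) / k by rw [prod_const, card_range]]
  calc _ ≤ ∑ l ∈ range m, |((c : ℝ) - l) / (k - l) - c / k| :=
        abs_prod_sub_prod_le _ (fun l hl' => abs_sub_div_sub_le_one hc hck' (hl l hl').2)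
          fun _ _ => by
            rw [abs_of_nonneg (by positivity)]
            exact div_le_one_of_le₀ hck' (by positivity)
    _ ≤ ∑ _l ∈ range m, 2 * (m : ℝ) / k := sum_le_sum fun l hl' =>
        (abs_sub_div_sub_sub_div_le hc hck' (hl l hl').1 (hl l hl').2).trans (by
          gcongr; exact_mod_cast (mem_range.1 hl').le)
    _ = 2 * m ^ 2 / k := by
        rw [sum_const, card_range, nsmul_eq_mul]
        ring

section Bernstein

variable {σ : Type*} [Fintype σ]

noncomputable def bernsteinCoeff (q : MvPolynomial σ ℝ) (k : ℕ) (g : σ → ℕ) : ℝ :=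
  ∑ α ∈ q.support, q.coeff α * ∏ i, ((g i).descFactorial (α i) : ℝ) / k.descFactorial (α i)

def bernsteinBasis {A : Type*} [CommRing A] (x : σ → A) (k : ℕ) (g : σ → ℕ) : A :=
  ∏ i, (k.choose (g i) : A) * x i ^ g i * (1 - x i) ^ (k - g i)

theorem bernsteinBasis_mem {A : Type*} [CommRing A] {S : Subsemiring A} {x : σ → A}
    (hx : ∀ i, x i ∈ S) (hx' : ∀ i, 1 - x i ∈ S) (k : ℕ) (g : σ → ℕ) : bernsteinBasis x k g ∈ S :=
  prod_mem fun i _ => mul_mem (mul_mem (natCast_mem _ _) (pow_mem (hx i) _)) (pow_mem (hx' i) _)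

variable {A : Type*} [CommRing A] [Algebra ℝ A]

theorem prod_pow_eq_sum_bernsteinBasis [DecidableEq σ] (x : σ → A) {k : ℕ} (α : σ → ℕ)
    (hα : ∀ i, α i ≤ k) :
    ∏ i, x i ^ α i = ∑ g ∈ Fintype.piFinset fun _ => range (k + 1),
      algebraMap ℝ A (∏ i, ((g i).descFactorial (α i) : ℝ) / k.descFactorial (α i)) *
        bernsteinBasis x k g := by
  simp_rw [bernsteinBasis, map_prod, ← prod_mul_distrib]
  exact (prod_congr rfl fun i _ => pow_eq_sum_descFactorial_div_mul (x i) (hα i)).trans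
    (prod_univ_sum _ _)

theorem aeval_eq_sum_bernsteinCoeff_mul [DecidableEq σ] (x : σ → A) (q : MvPolynomial σ ℝ)
    {k : ℕ} (hk : q.totalDegree ≤ k) :
    aeval x q = ∑ g ∈ Fintype.piFinset fun _ => range (k + 1),
      algebraMap ℝ A (bernsteinCoeff q k g) * bernsteinBasis x k g := by
  simp_rw [aeval_def, eval₂_eq', bernsteinCoeff, map_sum, sum_mul]
  rw [sum_comm]
  refine sum_congr rfl fun α hα => ?_
  rw [prod_pow_eq_sum_bernsteinBasis x α
    fun i => (monomial_le_degreeOf i hα).trans ((degreeOf_le_totalDegree q i).trans hk), mul_sum]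
  simp only [map_mul, mul_assoc]

theorem abs_bernsteinCoeff_sub_eval_le (q : MvPolynomial σ ℝ) {k : ℕ} {g : σ → ℕ}
    (hg : ∀ i, g i ≤ k) (hk : 2 * q.totalDegree ≤ k) :
    |bernsteinCoeff q k g - eval (fun i => (g i : ℝ) / k) q| ≤
      (∑ α ∈ q.support, |q.coeff α|) * (2 * q.totalDegree ^ 2 / k) := by
  set d := q.totalDegree
  rw [eval_eq', bernsteinCoeff, ← sum_sub_distrib, sum_mul]
  refine (abs_sum_le_sum_abs _ _).trans (sum_le_sum fun α hα => ?_)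
  have hαd : ∀ i, α i ≤ d := fun i =>
    (monomial_le_degreeOf i hα).trans (degreeOf_le_totalDegree q i)
  have hαsum : ∑ i, α i ≤ d := by
    simpa [Finsupp.sum_fintype] using le_totalDegree hα
  rw [← mul_sub, abs_mul]
  gcongr
  calc _ ≤ ∑ i, |((g i).descFactorial (α i) : ℝ) / k.descFactorial (α i) - ((g i : ℝ) / k) ^ α i| :=
        abs_prod_sub_prod_le _ (fun i _ => abs_descFactorial_div_le_one _ (hg i)) fun i _ => by
          rw [abs_of_nonneg (by positivity)]
          exact pow_le_one₀ (by positivity)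
            (div_le_one_of_le₀ (by exact_mod_cast hg i) (by positivity))
    _ ≤ ∑ i, 2 * (α i : ℝ) ^ 2 / k := sum_le_sum fun i _ =>
        abs_descFactorial_div_sub_pow_le (hg i) ((Nat.mul_le_mul_left 2 (hαd i)).trans hk)
    _ ≤ ∑ i, 2 * d * (α i : ℝ) / k := sum_le_sum fun i _ => by
        rw [sq, ← mul_assoc, mul_right_comm]
        gcongr
        exact_mod_cast hαd i
    _ ≤ 2 * d ^ 2 / k := by
        rw [← sum_div, ← mul_sum, sq, ← mul_assoc]
        gcongr
        exact_mod_cast hαsum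

theorem exists_forall_bernsteinCoeff_nonneg (q : MvPolynomial σ ℝ)
    (hq : ∀ y : σ → ℝ, (∀ i, y i ∈ Set.Icc 0 1) → 0 < eval y q) :
    ∃ k, q.totalDegree ≤ k ∧ ∀ g : σ → ℕ, (∀ i, g i ≤ k) → 0 ≤ bernsteinCoeff q k g := by
  obtain ⟨μ, hμ, hμq⟩ := (isCompact_univ_pi fun _ => isCompact_Icc).exists_forall_le'
    (continuous_eval q).continuousOn fun y hy => hq y fun i => hy i trivial
  set d := q.totalDegree
  set L := ∑ α ∈ q.support, |q.coeff α|
  obtain ⟨K, hK⟩ := exists_nat_gt (L * (2 * d ^ 2) / μ)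
  have hk : 0 < ((K + 2 * d : ℕ) : ℝ) := by
    have : 0 ≤ L * (2 * d ^ 2) / μ := by positivity
    push_cast; linarith [(d.cast_nonneg : (0 : ℝ) ≤ d)]
  refine ⟨K + 2 * d, by omega, fun g hg => ?_⟩
  have herr : L * (2 * d ^ 2 / ((K + 2 * d : ℕ) : ℝ)) < μ := by
    rw [← mul_div_assoc, div_lt_iff₀ hk]
    rw [div_lt_iff₀ hμ] at hK
    push_cast
    nlinarith [(d.cast_nonneg : (0 : ℝ) ≤ d)]
  have hgrid := hμq (fun i => (g i : ℝ) / (K + 2 * d : ℕ)) fun i _ =>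
    ⟨by positivity, div_le_one_of_le₀ (by exact_mod_cast hg i) hk.le⟩
  have hclose := abs_le.1 (abs_bernsteinCoeff_sub_eval_le q hg (by omega : 2 * d ≤ K + 2 * d))
  linarith [hclose.1]

theorem aeval_mem_of_pos_on_unitCube {S : Subsemiring A}
    (hS : ∀ c : ℝ, 0 ≤ c → algebraMap ℝ A c ∈ S) {x : σ → A} (hx : ∀ i, x i ∈ S)
    (hx' : ∀ i, 1 - x i ∈ S) (q : MvPolynomial σ ℝ)
    (hq : ∀ y : σ → ℝ, (∀ i, y i ∈ Set.Icc 0 1) → 0 < eval y q) : aeval x q ∈ S := by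
  classical
  obtain ⟨k, hk, hcoeff⟩ := exists_forall_bernsteinCoeff_nonneg q hq
  rw [aeval_eq_sum_bernsteinCoeff_mul x q hk]
  exact sum_mem fun g hg => mul_mem
    (hS _ (hcoeff g fun i => Nat.lt_succ_iff.1 (mem_range.1 (Fintype.mem_piFinset.1 hg i))))
    (bernsteinBasis_mem hx hx' k g)

end Bernstein

section Ball

variable {σ : Type*} [Fintype σ]

theorem C_add_mem_preordering_ball {N a : ℝ} (ha : 0 < a) (hN : N ≤ a ^ 2)
    {y : MvPolynomial σ ℝ} (i : σ) (hy : y ^ 2 = X i ^ 2) :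
    C a + y ∈ preordering (C N - ∑ l, X l ^ 2) := by
  classical
  refine algebraMap_add_mem_preordering ha hN ?_
  rw [algebraMap_eq, hy, show C N - X i ^ 2 - (C N - ∑ l, X l ^ 2) = ∑ l ∈ univ.erase i, X l ^ 2 by
    rw [sum_erase_eq_sub (mem_univ i)]; ring]
  exact IsSumSq.sum_sq _ _

theorem mem_preordering_ball_of_pos_on_cube {N a : ℝ} (ha : 0 < a) (hN : N ≤ a ^ 2)
    (F : MvPolynomial σ ℝ) (hF : ∀ x : σ → ℝ, (∀ i, |x i| ≤ a) → 0 < eval x F) :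
    F ∈ preordering (C N - ∑ l, X l ^ 2) := by
  set T := preordering (C N - ∑ l, X l ^ 2 : MvPolynomial σ ℝ)
  have hinv : C (2 * a)⁻¹ * C (2 * a) = (1 : MvPolynomial σ ℝ) := by
    rw [← map_mul, inv_mul_cancel₀ (by positivity), map_one]
  have hC : ∀ c : ℝ, 0 ≤ c → algebraMap ℝ (MvPolynomial σ ℝ) c ∈ T :=
    fun c hc => mem_preordering_of_isSumSq (isSumSq_algebraMap hc)
  have h2a : (0 : ℝ) ≤ (2 * a)⁻¹ := by positivity
  -- `y ↦ 2 a y - a` maps `[0, 1]^σ` onto `[-a, a]^σ`, with inverse `b`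
  set b : σ → MvPolynomial σ ℝ := fun i => C (2 * a)⁻¹ * (C a + X i)
  have hb : ∀ i, b i ∈ T := fun i =>
    mul_mem (hC _ h2a) (C_add_mem_preordering_ball ha hN i rfl)
  have hb' : ∀ i, 1 - b i ∈ T := fun i => by
    rw [show 1 - b i = C (2 * a)⁻¹ * (C a + -X i) by
      simp only [b, map_mul, map_ofNat] at hinv ⊢; linear_combination -hinv]
    exact mul_mem (hC _ h2a) (C_add_mem_preordering_ball ha hN i (neg_sq _))
  have hX : ∀ i, aeval b (C (2 * a) * X i - C a) = X i := fun i => by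
    rw [map_sub, map_mul, aeval_C, aeval_C, aeval_X, algebraMap_eq]
    linear_combination (C a + X i) * hinv
  have hq : ∀ y : σ → ℝ, (∀ i, y i ∈ Set.Icc 0 1) →
      0 < eval y (aeval (fun i => C (2 * a) * X i - C a) F) := fun y hy => by
    rw [aeval_eq_bind₁, eval, eval₂Hom_bind₁]
    refine hF _ fun i => ?_
    simp only [map_sub, map_mul, eval₂Hom_C, eval₂Hom_X', RingHom.id_apply, abs_le]
    constructor <;> nlinarith [(hy i).1, (hy i).2]
  simpa only [comp_aeval_apply, hX, aeval_X_left_apply] using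
    aeval_mem_of_pos_on_unitCube hC hb hb' _ hq

end Ball

theorem exists_pos_forall_le_or_exists_le_neg {X ι : Type*} [TopologicalSpace X] [Fintype ι]
    {D : Set X} (hD : IsCompact D) {f : X → ℝ} {h : ι → X → ℝ} (hf : ContinuousOn f D)
    (hh : ∀ j, ContinuousOn (h j) D) (hpos : ∀ x ∈ D, (∀ j, 0 ≤ h j x) → 0 < f x) :
    ∃ η > 0, ∀ x ∈ D, η ≤ f x ∨ ∃ j, h j x ≤ -η := by
  -- `φ x = max (f x) (max_j (-h j x))` is positive on `D`, hence bounded below by some `η > 0`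
  let φ : Option ι → X → ℝ := fun o x => o.elim (f x) fun j => -h j x
  have hφ : ContinuousOn (fun x => univ.sup' univ_nonempty (φ · x)) D :=
    ContinuousOn.finset_sup'_apply _ fun o _ => by
      cases o with
      | none => exact hf
      | some j => exact (hh j).neg
  obtain ⟨η, hη, hηφ⟩ := hD.exists_forall_le' hφ fun x hx => by
    rw [lt_sup'_iff]
    by_cases hx' : ∀ j, 0 ≤ h j x
    · exact ⟨none, mem_univ _, hpos x hx hx'⟩
    · obtain ⟨j, hj⟩ := not_forall.1 hx'
      exact ⟨some j, mem_univ _, neg_pos.2 (not_le.1 hj)⟩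
  refine ⟨η, hη, fun x hx => ?_⟩
  obtain ⟨o, -, ho⟩ := (le_sup'_iff _).1 (hηφ x hx)
  cases o with
  | none => exact Or.inl ho
  | some j => exact Or.inr ⟨j, le_neg.1 ho⟩

theorem mul_mul_one_sub_pow_le_one {u : ℝ} (h0 : 0 ≤ u) (h1 : u ≤ 1) (N : ℕ) :
    N * u * (1 - u) ^ N ≤ 1 := by
  have hpow : 0 ≤ (1 - u) ^ N := pow_nonneg (by linarith) N
  calc N * u * (1 - u) ^ N ≤ (1 + N * u) * (1 - u) ^ N := by nlinarith
    _ ≤ (1 + u) ^ N * (1 - u) ^ N := by gcongr; exact one_add_mul_le_pow (by linarith) N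
    _ = (1 - u ^ 2) ^ N := by rw [← mul_pow]; ring
    _ ≤ 1 := pow_le_one₀ (by nlinarith) (by nlinarith)

theorem mul_one_sub_div_pow_le_self {s c : ℝ} (hc : 0 < c) (hs : s ≤ 0) (N : ℕ) :
    s * (1 - s / c) ^ N ≤ s := by
  have : 1 ≤ (1 - s / c) ^ N := one_le_pow₀ (by linarith [div_nonpos_of_nonpos_of_nonneg hs hc.le])
  nlinarith

theorem nat_mul_mul_one_sub_div_pow_le {s c : ℝ} (hc : 0 < c) (hs : s ≤ c) (N : ℕ) :
    N * (s * (1 - s / c) ^ N) ≤ c := by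
  rcases le_or_gt 0 s with h0 | h0
  · have := mul_mul_one_sub_pow_le_one (div_nonneg h0 hc.le) ((div_le_one hc).2 hs) N
    calc N * (s * (1 - s / c) ^ N) = c * (N * (s / c) * (1 - s / c) ^ N) := by
          field_simp
      _ ≤ c := mul_le_of_le_one_right hc.le this
  · have := mul_one_sub_div_pow_le_self hc h0.le N
    nlinarith [(N.cast_nonneg : (0 : ℝ) ≤ N)]

theorem sub_mul_sum_penalty_pos {ι : Type*} [Fintype ι] {f η B c lam : ℝ} {v : ι → ℝ} {N : ℕ}
    (hη : 0 < η) (hc : 0 < c) (hv : ∀ j, v j ≤ c) (hlam : 0 ≤ lam) (hlamη : lam * η = B + 1)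
    (hB : -B ≤ f) (hN : lam * Fintype.card ι * c < N * min η 1)
    (hmargin : η ≤ f ∨ ∃ j, v j ≤ -η) :
    0 < f - lam * ∑ j, v j * (1 - v j / c) ^ N := by
  set ψ := fun j => v j * (1 - v j / c) ^ N
  have hψ : ∀ s : Finset ι, N * ∑ j ∈ s, ψ j ≤ Fintype.card ι * c := fun s => by
    rw [mul_sum]
    calc ∑ j ∈ s, N * ψ j ≤ ∑ _j ∈ s, c :=
          sum_le_sum fun j _ => nat_mul_mul_one_sub_div_pow_le hc (hv j) N
      _ ≤ ∑ _j, c := sum_le_sum_of_subset_of_nonneg (subset_univ s) fun _ _ _ => hc.le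
      _ = Fintype.card ι * c := by rw [sum_const, card_univ, nsmul_eq_mul]
  have hN0 : (0 : ℝ) < N :=
    pos_of_mul_pos_left ((by positivity : 0 ≤ lam * Fintype.card ι * c).trans_lt hN)
      (lt_min hη one_pos).le
  suffices N * (lam * ∑ j, ψ j) < N * f from sub_pos.2 (lt_of_mul_lt_mul_left this hN0.le)
  rcases hmargin with hf | ⟨j, hj⟩
  · calc N * (lam * ∑ j, ψ j) = lam * (N * ∑ j, ψ j) := by ring
      _ ≤ lam * (Fintype.card ι * c) := mul_le_mul_of_nonneg_left (hψ univ) hlam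
      _ < N * min η 1 := by linarith
      _ ≤ N * f := by gcongr; exact (min_le_left _ _).trans hf
  · classical
    have hψj : ψ j ≤ -η := (mul_one_sub_div_pow_le_self hc (by linarith) N).trans hj
    rw [← add_sum_erase _ _ (mem_univ j)]
    calc N * (lam * (ψ j + ∑ i ∈ univ.erase j, ψ i))
        = lam * (N * ∑ i ∈ univ.erase j, ψ i) + N * lam * ψ j := by ring
      _ ≤ lam * (Fintype.card ι * c) + N * lam * -η :=
        add_le_add (mul_le_mul_of_nonneg_left (hψ _) hlam)
          (mul_le_mul_of_nonneg_left hψj (by positivity))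
      _ = lam * Fintype.card ι * c - N * (B + 1) := by rw [← hlamη]; ring
      _ < N * min η 1 - N * (B + 1) := by linarith
      _ ≤ N * 1 - N * (B + 1) := by gcongr; exact min_le_right _ _
      _ ≤ N * f := by nlinarith

theorem exists_isSumSq_forall_pos_sub_sum_mul {σ ι : Type*} [Fintype ι] {D : Set (σ → ℝ)}
    (hD : IsCompact D) (h : ι → MvPolynomial σ ℝ) (f : MvPolynomial σ ℝ)
    (hpos : ∀ x ∈ D, (∀ j, 0 ≤ eval x (h j)) → 0 < eval x f) :
    ∃ t : ι → MvPolynomial σ ℝ, (∀ j, IsSumSq (t j)) ∧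
      ∀ x ∈ D, 0 < eval x (f - ∑ j, t j * h j) := by
  obtain ⟨η, hη, hmargin⟩ := exists_pos_forall_le_or_exists_le_neg hD
    (continuous_eval f).continuousOn (fun j => (continuous_eval (h j)).continuousOn) hpos
  obtain ⟨C', hC'⟩ := hD.bddAbove_image
    (continuous_finsetSum univ fun j _ => (continuous_eval (h j)).abs).continuousOn
  obtain ⟨b, hb⟩ := hD.bddBelow_image (continuous_eval f).continuousOn
  set c := max C' 1
  set lam := (|b| + 1) / η
  obtain ⟨N, hN⟩ := exists_nat_gt (lam * Fintype.card ι * c / min η 1)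
  refine ⟨fun j => C lam * (1 - C c⁻¹ * h j) ^ (2 * N), fun j => ?_, fun x hx => ?_⟩
  · exact (isSumSq_algebraMap (by positivity)).mul ((even_two_mul N).isSquare_pow _).isSumSq
  have hval : eval x (f - ∑ j, C lam * (1 - C c⁻¹ * h j) ^ (2 * N) * h j) =
      eval x f - lam * ∑ j, eval x (h j) * (1 - eval x (h j) / c) ^ (2 * N) := by
    simp only [map_sub, map_sum, map_mul, map_pow, eval_C, map_one, mul_sum]
    ring_nf
  rw [hval]
  refine sub_mul_sum_penalty_pos hη (by positivity) (fun j => ?_) (by positivity)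
    (div_mul_cancel₀ _ hη.ne') (neg_abs_le b |>.trans (hb ⟨x, hx, rfl⟩)) ?_ (hmargin x hx)
  · calc eval x (h j) ≤ ∑ i, |eval x (h i)| :=
          (le_abs_self _).trans (single_le_sum (f := fun i => |eval x (h i)|)
            (fun i _ => abs_nonneg _) (mem_univ j))
      _ ≤ c := (hC' ⟨x, hx, rfl⟩).trans (le_max_left _ _)
  · rw [div_lt_iff₀ (lt_min hη one_pos)] at hN
    push_cast
    nlinarith [lt_min hη one_pos]

end Putinar

open Putinar MvPolynomial Finset in
/-- (Theorem 1.) Suppose the quadratic module generated by `1 - g 1, ..., 1 - g m` is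
Archimedean, and let `S = {x | ∀ i, g i (x) ≤ 1}`. If `p(x) < 1` for all `x ∈ S`, then
there exist sum of squares polynomials `τ i` such that `1 - p - ∑ i, τ i * (1 - g i)` is
a sum of squares. -/
theorem putinar_containment_certificate
    {n m : ℕ} (g : Fin m → MvPolynomial (Fin n) ℝ)
    (S : Set (Fin n → ℝ))
    (hS : S = {x : Fin n → ℝ | ∀ i, MvPolynomial.eval x (g i) ≤ 1})
    (hArch : ∃ (N : ℝ) (σ₀ : MvPolynomial (Fin n) ℝ) (σ : Fin m → MvPolynomial (Fin n) ℝ),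
      IsSos σ₀ ∧ (∀ i, IsSos (σ i)) ∧
      MvPolynomial.C N - ∑ k : Fin n, (MvPolynomial.X k) ^ 2
        = σ₀ + ∑ i, σ i * (1 - g i))
    (p : MvPolynomial (Fin n) ℝ)
    (hp : ∀ x ∈ S, MvPolynomial.eval x p < 1) :
    ∃ τ : Fin m → MvPolynomial (Fin n) ℝ,
      (∀ i, IsSos (τ i)) ∧ IsSos (1 - p - ∑ i, τ i * (1 - g i)) := by
  obtain ⟨N, σ₀, σ, hσ₀, hσ, hArch⟩ := hArch
  have ha : 0 < |N| + 1 := by positivity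
  have hN : N ≤ (|N| + 1) ^ 2 := by nlinarith [le_abs_self N, abs_nonneg N]
  obtain ⟨t, ht, hpos⟩ := exists_isSumSq_forall_pos_sub_sum_mul
    (isCompact_univ_pi fun _ => isCompact_Icc (a := -(|N| + 1)) (b := |N| + 1))
    (fun i => 1 - g i) (1 - p) fun x _ hx => by
      have hxS : x ∈ S := hS ▸ fun i => by simpa using hx i
      simpa using hp x hxS
  have hball := mem_preordering_ball_of_pos_on_cube ha hN _ fun x hx =>
    hpos x fun i _ => abs_le.1 (hx i)
  have hG : C N - ∑ k, X k ^ 2 ∈ quadraticModule fun i => 1 - g i := by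
    rw [hArch]
    exact add_mem (mem_quadraticModule_of_isSumSq (isSos_iff_isSumSq.1 hσ₀))
      (sum_mem fun i _ => mul_generator_mem_quadraticModule (isSos_iff_isSumSq.1 (hσ i)) i)
  obtain ⟨τ, hτ, hcert⟩ : 1 - p ∈ quadraticModule fun i => 1 - g i := by
    rw [← sub_add_cancel (1 - p) (∑ i, t i * (1 - g i))]
    exact add_mem (preordering_subset_quadraticModule hG hball)
      (sum_mem fun i _ => mul_generator_mem_quadraticModule (ht i) i)
  exact ⟨τ, fun i => isSos_iff_isSumSq.2 (hτ i), isSos_iff_isSumSq.2 hcert⟩
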